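/- Let M be an antisymmetric d×d real matrix and g radial and C¹ away from 0. Then for any C¹ radial function φ on ℝ^d and probability density ρ, the vector field (M∇g)∗ρ satisfies: if ρ is radial, then ∇φ(ξ) · ((M∇g)∗ρ)(ξ) integrates against any radial test configuration to produce div(ρ (M∇g)∗ρ) = 0, i.e., for radial ρ, div(ρ · (M∇g)∗ρ) ≡ 0 distributionally. -/

import Mathlib

open MeasureTheory InnerProductSpace RealInnerProductSpace NormedSpace

section AuxForStatement17

variable {d : ℕ}

local notation "E" => EuclideanSpace ℝ (Fin d)

noncomputable def Qflow (M : E →ₗ[ℝ] E) (t : ℝ) : E →L[ℝ] E :=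
  exp (t • (LinearMap.toContinuousLinearMap M))

lemma Qflow_zero (M : E →ₗ[ℝ] E) (x : E) : Qflow M 0 x = x := by
  have h1 : (0 : ℝ) • (LinearMap.toContinuousLinearMap M) = 0 := by
    ext y; simp
  rw [Qflow, h1, exp_zero]; rfl

lemma Qflow_add (M : E →ₗ[ℝ] E) (s t : ℝ) (x : E) :
    Qflow M (s + t) x = Qflow M s (Qflow M t x) := by
  have h1 : (s + t) • (LinearMap.toContinuousLinearMap M)
      = s • (LinearMap.toContinuousLinearMap M) + t • (LinearMap.toContinuousLinearMap M) :=
    by ext y; simp [add_smul, add_mul]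
  have hc : Commute (s • (LinearMap.toContinuousLinearMap M))
      (t • (LinearMap.toContinuousLinearMap M)) := by
    show _ = _
    ext x
    simp only [ContinuousLinearMap.mul_apply, ContinuousLinearMap.smul_apply, _root_.map_smul]
    rw [smul_comm]
  have h : Qflow M (s + t) = Qflow M s * Qflow M t := by
    rw [Qflow, h1, exp_add_of_commute_of_mem_ball (𝕂 := ℝ) hc
      ((expSeries_radius_eq_top ℝ (E →L[ℝ] E)).symm ▸ edist_lt_top _ _)
      ((expSeries_radius_eq_top ℝ (E →L[ℝ] E)).symm ▸ edist_lt_top _ _)]; rfl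
  rw [h]; rfl

lemma Qflow_comm (M : E →ₗ[ℝ] E) (t : ℝ) (x : E) :
    M (Qflow M t x) = Qflow M t (M x) := by
  have hc : Commute (LinearMap.toContinuousLinearMap M)
      (t • (LinearMap.toContinuousLinearMap M)) := by
    show _ = _
    ext x
    simp only [ContinuousLinearMap.mul_apply, ContinuousLinearMap.smul_apply, _root_.map_smul]
  have h : Commute (LinearMap.toContinuousLinearMap M) (Qflow M t) := hc.exp_right
  have h2 := congrArg (fun (A : E →L[ℝ] E) => A x) h
  simpa [ContinuousLinearMap.mul_apply] using h2

lemma Qflow_hasDerivAt (M : E →ₗ[ℝ] E) (t : ℝ) (x : E) :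
    HasDerivAt (fun s => Qflow M s x) (M (Qflow M t x)) t := by
  have h : HasDerivAt (fun s : ℝ => exp (s • (LinearMap.toContinuousLinearMap M)))
      ((LinearMap.toContinuousLinearMap M) * exp (t • (LinearMap.toContinuousLinearMap M))) t :=
    hasDerivAt_exp_smul_const' (𝕂 := ℝ) (LinearMap.toContinuousLinearMap M) t
  have h2 := h.clm_apply (hasDerivAt_const t x)
  simpa [Qflow, ContinuousLinearMap.mul_apply] using h2

lemma Qflow_inner (M : E →ₗ[ℝ] E)
    (hM : ∀ v w : E, (inner ℝ (M v) w : ℝ) = - inner ℝ v (M w)) (t : ℝ) (a b : E) :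
    ⟪Qflow M t a, Qflow M t b⟫ = ⟪a, b⟫ := by
  have hf : ∀ s : ℝ, HasDerivAt (fun u : ℝ => ⟪Qflow M u a, Qflow M u b⟫) 0 s := by
    intro s
    have h := (Qflow_hasDerivAt M s a).inner ℝ (Qflow_hasDerivAt M s b)
    have hz : ⟪Qflow M s a, M (Qflow M s b)⟫ + ⟪M (Qflow M s a), Qflow M s b⟫ = 0 := by
      rw [hM]; ring
    rwa [hz] at h
  have hconst : (fun u : ℝ => ⟪Qflow M u a, Qflow M u b⟫) t
      = (fun u : ℝ => ⟪Qflow M u a, Qflow M u b⟫) 0 :=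
    is_const_of_deriv_eq_zero (fun s => (hf s).differentiableAt)
      (fun s => (hf s).deriv) t 0
  simp only [Qflow_zero] at hconst
  exact hconst

noncomputable def QflowIso (M : E →ₗ[ℝ] E)
    (hM : ∀ v w : E, (inner ℝ (M v) w : ℝ) = - inner ℝ v (M w)) (t : ℝ) : E ≃ₗᵢ[ℝ] E :=
  LinearEquiv.isometryOfInner
    { toFun := Qflow M t
      map_add' := map_add _
      map_smul' := map_smul _
      invFun := Qflow M (-t)
      left_inv := fun x => by
        show Qflow M (-t) (Qflow M t x) = x
        rw [← Qflow_add]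
        simpa using Qflow_zero M x
      right_inv := fun x => by
        show Qflow M t (Qflow M (-t) x) = x
        rw [← Qflow_add]
        simpa using Qflow_zero M x }
    (Qflow_inner M hM t)

@[simp] lemma QflowIso_apply (M : E →ₗ[ℝ] E)
    (hM : ∀ v w : E, (inner ℝ (M v) w : ℝ) = - inner ℝ v (M w))
    (t : ℝ) (x : E) : QflowIso M hM t x = Qflow M t x := rfl

lemma aux_gradient_isometry (g : E → ℝ) (Q : E ≃ₗᵢ[ℝ] E)
    (hgQ : ∀ z, g (Q z) = g z) {z : E}
    (hdiff : DifferentiableAt ℝ g (Q z)) :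
    gradient g (Q z) = Q (gradient g z) := by
  have hQd : HasFDerivAt (⇑Q) (Q.toContinuousLinearEquiv : E →L[ℝ] E) z :=
    Q.toContinuousLinearEquiv.hasFDerivAt
  have h1 : HasFDerivAt g (fderiv ℝ g (Q z)) (Q z) := hdiff.hasFDerivAt
  have h2 : HasFDerivAt g
      ((fderiv ℝ g (Q z)).comp (Q.toContinuousLinearEquiv : E →L[ℝ] E)) z := by
    have h3 := h1.comp z hQd
    have : g ∘ ⇑Q = g := funext hgQ
    rwa [this] at h3
  apply ext_inner_right ℝ
  intro u
  have e1 : ⟪gradient g (Q z), u⟫ = fderiv ℝ g (Q z) u := by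
    rw [gradient]; exact toDual_symm_apply
  have e2 : ⟪gradient g z, Q.symm u⟫ = fderiv ℝ g z (Q.symm u) := by
    rw [gradient]; exact toDual_symm_apply
  have e3 : ⟪Q (gradient g z), u⟫ = ⟪gradient g z, Q.symm u⟫ := by
    conv_lhs => rw [show u = Q (Q.symm u) by simp]
    rw [Q.inner_map_map]
  rw [e1, e3, e2, h2.fderiv]
  simp

lemma aux_ae_ne (hd : 0 < d) (x : E) : ∀ᵐ y : E, y ≠ x := by
  haveI : Nonempty (Fin d) := ⟨⟨0, hd⟩⟩
  have h : (volume : Measure E) {x} = 0 := measure_singleton x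
  have : {y : E | ¬ y ≠ x} = {x} := by ext y; simp
  rw [MeasureTheory.ae_iff, this]
  exact h

lemma aux_Sc (hd : 0 < d) (g ρ : E → ℝ)
    (hgrad : ∀ (S : E ≃ₗᵢ[ℝ] E) (z : E), z ≠ 0 → gradient g (S z) = S (gradient g z))
    (hρS : ∀ (S : E ≃ₗᵢ[ℝ] E) (z : E), ρ (S z) = ρ z)
    (x u : E) (hx : x ≠ 0) (hu : ⟪u, x⟫ = 0) :
    ∫ y, ρ y * ⟪gradient g (x - y), u⟫ = 0 := by
  by_cases hu0 : u = 0
  · simp [hu0]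
  set S := ((ℝ ∙ u)ᗮ).reflection with hS
  have hSx : S x = x :=
    Submodule.reflection_mem_subspace_eq_self (Submodule.mem_orthogonal_singleton_iff_inner_right.mpr hu)
  have hSu : S u = -u := Submodule.reflection_orthogonalComplement_singleton_eq_neg u
  have hcv : ∫ y, ρ (S y) * ⟪gradient g (x - S y), u⟫ = ∫ y, ρ y * ⟪gradient g (x - y), u⟫ :=
    S.measurePreserving.integral_comp S.toHomeomorph.measurableEmbedding
      (fun y => ρ y * ⟪gradient g (x - y), u⟫)
  have hcong : ∀ᵐ y : E, ρ (S y) * ⟪gradient g (x - S y), u⟫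
      = -(ρ y * ⟪gradient g (x - y), u⟫) := by
    filter_upwards [aux_ae_ne hd x] with y hy
    have hxy : x - y ≠ 0 := sub_ne_zero.mpr (Ne.symm hy)
    have h1 : x - S y = S (x - y) := by rw [map_sub, hSx]
    rw [hρS S y, h1, hgrad S _ hxy]
    have h2 : ⟪S (gradient g (x - y)), u⟫ = ⟪gradient g (x - y), S u⟫ := by
      conv_lhs => rw [show u = S (S u) by rw [Submodule.reflection_reflection]]
      rw [S.inner_map_map]
    rw [h2, hSu, inner_neg_right]
    ring
  rw [integral_congr_ae hcong, integral_neg] at hcv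
  linarith

def flowSigma (M : E →ₗ[ℝ] E) : MeasurableSpace E where
  MeasurableSet' A := MeasurableSet A ∧ ∀ t : ℝ, (fun x => Qflow M t x) ⁻¹' A = A
  measurableSet_empty := ⟨MeasurableSet.empty, fun t => by simp⟩
  measurableSet_compl := fun A hA => ⟨hA.1.compl, fun t => by
    rw [Set.preimage_compl, hA.2 t]⟩
  measurableSet_iUnion := fun f hf => ⟨MeasurableSet.iUnion (fun i => (hf i).1), fun t => by
    rw [Set.preimage_iUnion]
    exact Set.iUnion_congr fun i => (hf i).2 t⟩

lemma flowSigma_le (M : E →ₗ[ℝ] E) :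
    flowSigma M ≤ (inferInstance : MeasurableSpace E) :=
  fun _ hs => hs.1

lemma flowSigma_measurableSet {M : E →ₗ[ℝ] E} {A : Set E}
    (h1 : MeasurableSet A) (h2 : ∀ t : ℝ, (fun x => Qflow M t x) ⁻¹' A = A) :
    MeasurableSet[flowSigma M] A := ⟨h1, h2⟩


end AuxForStatement17

set_option maxHeartbeats 2000000 in
/-- For a radial probability density `ρ`, a radial interaction potential `g`
(`C¹` away from the origin), and an antisymmetric matrix `M`, the vector field
`ρ · (M∇g)∗ρ` is divergence free in the distributional sense:
`∫ ρ(x) ⟨((M∇g)∗ρ)(x), ∇φ(x)⟩ dx = 0` for all smooth compactly supported test functions. -/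
theorem radial_hamiltonian_drift_divergence_free
    (d : ℕ) (hd : 0 < d)
    (M : EuclideanSpace ℝ (Fin d) →ₗ[ℝ] EuclideanSpace ℝ (Fin d))
    (hM : ∀ v w : EuclideanSpace ℝ (Fin d), (inner ℝ (M v) w : ℝ) = - inner ℝ v (M w))
    (g : EuclideanSpace ℝ (Fin d) → ℝ)
    (hg_rad : ∃ w : ℝ → ℝ, ∀ x : EuclideanSpace ℝ (Fin d), x ≠ 0 → g x = w ‖x‖)
    (hg_C1 : ContDiffOn ℝ 1 g {(0 : EuclideanSpace ℝ (Fin d))}ᶜ)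
    (ρ : EuclideanSpace ℝ (Fin d) → ℝ)
    (hρ_meas : Measurable ρ) (hρ_nonneg : ∀ x, 0 ≤ ρ x)
    (hρ_int : Integrable ρ) (hρ_prob : ∫ x, ρ x = 1)
    (hρ_rad : ∃ r : ℝ → ℝ, ∀ x : EuclideanSpace ℝ (Fin d), ρ x = r ‖x‖)
    (conv : EuclideanSpace ℝ (Fin d) → EuclideanSpace ℝ (Fin d))
    (hconv : ∀ x, conv x = ∫ y, ρ y • M (gradient g (x - y)))
    (hconv_int : Integrable (fun x => ρ x • conv x)) :
    ∀ φ : EuclideanSpace ℝ (Fin d) → ℝ, ContDiff ℝ (⊤ : ℕ∞) φ → HasCompactSupport φ →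
      ∫ x, ρ x * (inner ℝ (conv x) (gradient φ x) : ℝ) = 0 := by
  intro φ hφ hφc
  classical
  obtain ⟨w, hw⟩ := hg_rad
  obtain ⟨r, hr⟩ := hρ_rad
  -- radial invariance of g and ρ under all linear isometries
  have hgS : ∀ (S : EuclideanSpace ℝ (Fin d) ≃ₗᵢ[ℝ] EuclideanSpace ℝ (Fin d)) (z : _),
      g (S z) = g z := by
    intro S z
    by_cases hz : z = 0
    · simp [hz]
    · have hz' : S z ≠ 0 := by simpa using hz
      rw [hw _ hz', hw _ hz, S.norm_map]
  have hρS : ∀ (S : EuclideanSpace ℝ (Fin d) ≃ₗᵢ[ℝ] EuclideanSpace ℝ (Fin d)) (z : _),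
      ρ (S z) = ρ z := by
    intro S z
    rw [hr, hr, S.norm_map]
  have hdiffg : ∀ z : EuclideanSpace ℝ (Fin d), z ≠ 0 → DifferentiableAt ℝ g z := by
    intro z hz
    have := (hg_C1.contDiffAt (show {(0: EuclideanSpace ℝ (Fin d))}ᶜ ∈ nhds z from
      (isOpen_compl_singleton).mem_nhds (by simpa using hz)))
    exact this.differentiableAt one_ne_zero
  have hgradS : ∀ (S : EuclideanSpace ℝ (Fin d) ≃ₗᵢ[ℝ] EuclideanSpace ℝ (Fin d)) (z : _),
      z ≠ 0 → gradient g (S z) = S (gradient g z) := by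
    intro S z hz
    exact aux_gradient_isometry g S (hgS S) (by
      apply hdiffg
      simpa using hz)
  -- flow equivariance of conv
  have hMQ : ∀ (t : ℝ) (x : EuclideanSpace ℝ (Fin d)),
      M (Qflow M t x) = Qflow M t (M x) := Qflow_comm M
  have hconvQ : ∀ (t : ℝ) (x : EuclideanSpace ℝ (Fin d)),
      conv (Qflow M t x) = Qflow M t (conv x) := by
    intro t x
    set S := QflowIso M hM t with hSdef
    have hMS : ∀ v, M (S v) = S (M v) := by
      intro v
      show M (Qflow M t v) = Qflow M t (M v)
      exact hMQ t v
    have hcv : ∫ y, ρ (S y) • M (gradient g (Qflow M t x - S y))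
        = ∫ y, ρ y • M (gradient g (Qflow M t x - y)) :=
      S.measurePreserving.integral_comp S.toHomeomorph.measurableEmbedding
        (fun y => ρ y • M (gradient g (Qflow M t x - y)))
    have hcong : ∀ᵐ y : EuclideanSpace ℝ (Fin d),
        ρ (S y) • M (gradient g (Qflow M t x - S y))
          = S (ρ y • M (gradient g (x - y))) := by
      filter_upwards [aux_ae_ne hd x] with y hy
      have hxy : x - y ≠ 0 := sub_ne_zero.mpr (Ne.symm hy)
      have h1 : Qflow M t x - S y = S (x - y) := by
        rw [map_sub]
        rfl
      rw [hρS S y, h1, hgradS S _ hxy, hMS, _root_.map_smul]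
    calc conv (Qflow M t x) = ∫ y, ρ y • M (gradient g (Qflow M t x - y)) := hconv _
      _ = ∫ y, ρ (S y) • M (gradient g (Qflow M t x - S y)) := hcv.symm
      _ = ∫ y, S (ρ y • M (gradient g (x - y))) := integral_congr_ae hcong
      _ = S (∫ y, ρ y • M (gradient g (x - y))) :=
          S.toLinearIsometry.integral_comp_comm (fun y => ρ y • M (gradient g (x - y)))
      _ = Qflow M t (conv x) := by rw [hconv x]; rfl
  -- conv x is parallel to M x
  have hspan : ∀ x : EuclideanSpace ℝ (Fin d), x ≠ 0 → ∃ c : ℝ, conv x = c • M x := by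
    intro x hx
    have hperp : ∀ v, v ∈ (ℝ ∙ (M x))ᗮ → ⟪v, conv x⟫ = 0 := by
      intro v hv
      have hvMx : ⟪M x, v⟫ = 0 := Submodule.mem_orthogonal_singleton_iff_inner_right.mp hv
      by_cases hint :
        Integrable (fun y : EuclideanSpace ℝ (Fin d) => ρ y • M (gradient g (x - y)))
      · have h1 : ⟪v, conv x⟫ = ∫ y, ⟪v, ρ y • M (gradient g (x - y))⟫ := by
          rw [hconv x]
          exact (integral_inner hint v).symm
        have h2 : (fun y : EuclideanSpace ℝ (Fin d) => ⟪v, ρ y • M (gradient g (x - y))⟫)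
            = fun y => -(ρ y * ⟪gradient g (x - y), M v⟫) := by
          funext y
          rw [real_inner_smul_right, real_inner_comm, hM]
          ring
        have h3 : ⟪M v, x⟫ = 0 := by
          rw [hM]
          rw [real_inner_comm] at hvMx
          rw [hvMx]
          ring
        rw [h1, h2, integral_neg,
          aux_Sc hd g ρ hgradS hρS x (M v) hx h3, neg_zero]
      · have hc0 : conv x = 0 := by rw [hconv x]; exact integral_undef hint
        simp [hc0]
    have hmem : conv x ∈ (ℝ ∙ (M x))ᗮᗮ := (Submodule.mem_orthogonal _ _).mpr hperp
    rw [Submodule.orthogonal_orthogonal] at hmem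
    obtain ⟨c, hc⟩ := Submodule.mem_span_singleton.mp hmem
    exact ⟨c, hc.symm⟩
  -- the radial coefficient field
  set G : EuclideanSpace ℝ (Fin d) → ℝ :=
    fun x => ρ x * (⟪conv x, M x⟫ / ‖M x‖ ^ 2) with hGdef
  have hVG : ∀ x : EuclideanSpace ℝ (Fin d), x ≠ 0 → ρ x • conv x = G x • M x := by
    intro x hx
    obtain ⟨c, hc⟩ := hspan x hx
    by_cases hMx : M x = 0
    · rw [hGdef]
      simp [hMx, hc]
    · have hnorm : ‖M x‖ ^ 2 ≠ 0 := pow_ne_zero 2 (norm_ne_zero_iff.mpr hMx)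
      have hinner : ⟪conv x, M x⟫ = c * ‖M x‖ ^ 2 := by
        rw [hc, real_inner_smul_left, real_inner_self_eq_norm_sq]
      have hG : G x = ρ x * c := by
        rw [hGdef]
        simp only
        rw [hinner]
        field_simp
      rw [hG, hc, smul_smul]
  have hQnorm : ∀ (t : ℝ) (v : EuclideanSpace ℝ (Fin d)), ‖Qflow M t v‖ = ‖v‖ :=
    fun t v => (QflowIso M hM t).norm_map v
  have hGQ : ∀ (t : ℝ) (x : EuclideanSpace ℝ (Fin d)), G (Qflow M t x) = G x := by
    intro t x
    rw [hGdef]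
    simp only
    rw [hconvQ, hMQ]
    rw [show ρ (Qflow M t x) = ρ x from hρS (QflowIso M hM t) x]
    rw [show (⟪Qflow M t (conv x), Qflow M t (M x)⟫ : ℝ) = ⟪conv x, M x⟫ from
      Qflow_inner M hM t _ _]
    rw [show ‖Qflow M t (M x)‖ = ‖M x‖ from hQnorm t _]
  -- measurability
  have hgrad_meas : Measurable (fun z : EuclideanSpace ℝ (Fin d) => gradient g z) := by
    have h1 : Measurable (fderiv ℝ g) := measurable_fderiv ℝ g
    have h2 : Continuous fun L : EuclideanSpace ℝ (Fin d) →L[ℝ] ℝ =>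
        (InnerProductSpace.toDual ℝ (EuclideanSpace ℝ (Fin d))).symm L :=
      (InnerProductSpace.toDual ℝ _).symm.continuous
    exact h2.measurable.comp h1
  have hMcont : Continuous fun v : EuclideanSpace ℝ (Fin d) => M v :=
    M.continuous_of_finiteDimensional
  have hconv_meas : Measurable conv := by
    have hker : StronglyMeasurable
        (fun p : (EuclideanSpace ℝ (Fin d)) × (EuclideanSpace ℝ (Fin d)) =>
          ρ p.2 • M (gradient g (p.1 - p.2))) := by
      apply Measurable.stronglyMeasurable
      exact ((hρ_meas.comp measurable_snd).smul
        ((hMcont.measurable).comp (hgrad_meas.comp (measurable_fst.sub measurable_snd))))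
    have hsm := MeasureTheory.StronglyMeasurable.integral_prod_right' (ν := volume) hker
    have hfun : conv = fun x => ∫ y, ρ y • M (gradient g (x - y)) := funext hconv
    rw [hfun]
    exact hsm.measurable
  have hGmeas : Measurable G := by
    rw [hGdef]
    apply hρ_meas.mul
    apply Measurable.div
    · exact hconv_meas.inner hMcont.measurable
    · exact (hMcont.norm.measurable).pow_const 2
  -- facts about the test function
  have hφdiff : ∀ z : EuclideanSpace ℝ (Fin d), DifferentiableAt ℝ φ z :=
    fun z => (hφ.differentiable (by simp)).differentiableAt
  have hφcont : Continuous φ := hφ.continuous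
  obtain ⟨C, hC⟩ : ∃ C : ℝ, ∀ z : EuclideanSpace ℝ (Fin d), ‖fderiv ℝ φ z‖ ≤ C :=
    (HasCompactSupport.fderiv (𝕜 := ℝ) hφc).exists_bound_of_continuous (hφ.continuous_fderiv (by simp))
  obtain ⟨R, hR⟩ : ∃ R : ℝ, tsupport φ ⊆ Metric.closedBall 0 R :=
    hφc.isBounded.subset_closedBall 0
  have hφzero : ∀ z : EuclideanSpace ℝ (Fin d), z ∉ Metric.closedBall (0:EuclideanSpace ℝ (Fin d)) R → φ z = 0 := by
    intro z hz
    apply image_eq_zero_of_notMem_tsupport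
    intro hmem
    exact hz (hR hmem)
  have hφQd : ∀ (x : EuclideanSpace ℝ (Fin d)) (t : ℝ),
      HasDerivAt (fun s => φ (Qflow M s x)) (fderiv ℝ φ (Qflow M t x) (M (Qflow M t x))) t :=
    fun x t => (hφdiff _).hasFDerivAt.comp_hasDerivAt t (Qflow_hasDerivAt M t x)
  have hbnd : ∀ (s : ℝ) (x : EuclideanSpace ℝ (Fin d)),
      ‖fderiv ℝ φ (Qflow M s x) (M (Qflow M s x))‖ ≤ C * ‖M x‖ := by
    intro s x
    calc ‖fderiv ℝ φ (Qflow M s x) (M (Qflow M s x))‖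
        ≤ ‖fderiv ℝ φ (Qflow M s x)‖ * ‖M (Qflow M s x)‖ :=
          (fderiv ℝ φ (Qflow M s x)).le_opNorm _
      _ ≤ C * ‖M x‖ := by
          have h1 : ‖M (Qflow M s x)‖ = ‖M x‖ := by rw [hMQ, hQnorm]
          rw [h1]
          exact mul_le_mul_of_nonneg_right (hC _) (norm_nonneg _)
  have hMVT : ∀ (t : ℝ) (x : EuclideanSpace ℝ (Fin d)),
      |φ (Qflow M t x) - φ x| ≤ C * ‖M x‖ * |t| := by
    intro t x
    have key := Convex.norm_image_sub_le_of_norm_hasDerivWithin_le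
      (f := fun s => φ (Qflow M s x))
      (f' := fun s => fderiv ℝ φ (Qflow M s x) (M (Qflow M s x)))
      (C := C * ‖M x‖) (s := (Set.univ : Set ℝ))
      (fun s _ => (hφQd x s).hasDerivWithinAt)
      (fun s _ => hbnd s x) convex_univ (Set.mem_univ 0) (Set.mem_univ t)
    simpa [Qflow_zero, Real.norm_eq_abs] using key
  have hFt_int : ∀ t : ℝ, Integrable (fun x => G x * (φ (Qflow M t x) - φ x)) := by
    intro t
    apply Integrable.mono' ((hconv_int.norm).const_mul (C * |t|))
    · exact (hGmeas.mul (((hφcont.comp (Qflow M t).continuous).sub hφcont).measurable)).aestronglyMeasurable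
    · filter_upwards [aux_ae_ne hd 0] with x hx
      rw [Real.norm_eq_abs, abs_mul]
      calc |G x| * |φ (Qflow M t x) - φ x|
          ≤ |G x| * (C * ‖M x‖ * |t|) :=
            mul_le_mul_of_nonneg_left (hMVT t x) (abs_nonneg _)
        _ = (C * |t|) * (|G x| * ‖M x‖) := by ring
        _ = (C * |t|) * ‖G x • M x‖ := by rw [norm_smul, Real.norm_eq_abs]
        _ = (C * |t|) * ‖ρ x • conv x‖ := by rw [hVG x hx]
  -- the invariant σ-algebra of the flow
  have hle := flowSigma_le M
  set μ : Measure (EuclideanSpace ℝ (Fin d)) :=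
    volume.restrict (Metric.closedBall (0 : EuclideanSpace ℝ (Fin d)) R) with hμdef
  haveI hμfin : IsFiniteMeasure μ := by
    constructor
    rw [hμdef, Measure.restrict_apply_univ]
    exact (isCompact_closedBall _ _).measure_lt_top
  haveI : SigmaFinite (μ.trim hle) := by
    have hfin : IsFiniteMeasure (μ.trim hle) := by
      constructor
      rw [trim_measurableSet_eq hle (flowSigma_measurableSet MeasurableSet.univ (fun t => by simp))]
      exact measure_lt_top μ _
    infer_instance
  have hball_inv : ∀ t : ℝ,
      (fun x => Qflow M t x) ⁻¹' (Metric.closedBall 0 R) = Metric.closedBall (0:EuclideanSpace ℝ (Fin d)) R := by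
    intro t
    ext z
    simp only [Set.mem_preimage, Metric.mem_closedBall, dist_zero_right]
    rw [hQnorm]
  have hQmp : ∀ t : ℝ, MeasurePreserving (fun x => Qflow M t x) μ μ := by
    intro t
    have h0 : MeasurePreserving (fun x => Qflow M t x) volume volume :=
      (QflowIso M hM t).measurePreserving
    have h1 := h0.restrict_preimage
      (measurableSet_closedBall (x := (0:EuclideanSpace ℝ (Fin d))) (ε := R))
    rw [hball_inv t] at h1
    exact h1
  have hQemb : ∀ t : ℝ, MeasurableEmbedding (fun x => Qflow M t x) := fun t =>
    (QflowIso M hM t).toHomeomorph.measurableEmbedding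
  have hGsm : StronglyMeasurable[flowSigma M] G := by
    apply Measurable.stronglyMeasurable
    intro B hB
    refine ⟨hGmeas hB, fun t => ?_⟩
    ext z
    simp only [Set.mem_preimage]
    rw [hGQ t z]
  have hφint : Integrable φ μ := by
    exact hφcont.continuousOn.integrableOn_compact (isCompact_closedBall _ _)
  have hHint : ∀ t : ℝ, Integrable (fun x => φ (Qflow M t x)) μ :=
    fun t => (hφcont.comp (Qflow M t).continuous).continuousOn.integrableOn_compact (isCompact_closedBall _ _)
  have hHtint : ∀ t : ℝ, Integrable (fun x => φ (Qflow M t x) - φ x) μ :=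
    fun t => (hHint t).sub hφint
  -- conditional expectation of the increment vanishes
  have hcond0 : ∀ t : ℝ,
      (fun _ : EuclideanSpace ℝ (Fin d) => (0:ℝ)) =ᵐ[μ]
        μ[(fun x => φ (Qflow M t x) - φ x) | flowSigma M] := by
    intro t
    apply ae_eq_condExp_of_forall_setIntegral_eq hle (hHtint t)
    · intro s _ _
      exact (integrable_zero _ _ _).integrableOn
    · intro s hs hμs
      have hsub : ∫ x in s, (φ (Qflow M t x) - φ x) ∂μ
          = (∫ x in s, φ (Qflow M t x) ∂μ) - ∫ x in s, φ x ∂μ :=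
        integral_sub ((hHint t).integrableOn) (hφint.integrableOn)
      have hpre := (hQmp t).setIntegral_preimage_emb (hQemb t) φ s
      rw [hs.2 t] at hpre
      rw [hsub, hpre]
      simp
    · exact aestronglyMeasurable_const
  -- pull-out property and vanishing of the main integral over the ball
  have haz : ∀ t : ℝ, ∫ x, G x * (φ (Qflow M t x) - φ x) = 0 := by
    intro t
    have hzero : ∀ x : EuclideanSpace ℝ (Fin d),
        x ∉ Metric.closedBall (0:EuclideanSpace ℝ (Fin d)) R →
        G x * (φ (Qflow M t x) - φ x) = 0 := by
      intro x hx
      have h1 : φ x = 0 := hφzero x hx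
      have h2 : φ (Qflow M t x) = 0 := by
        apply hφzero
        intro hmem
        apply hx
        rw [Metric.mem_closedBall, dist_zero_right] at hmem ⊢
        rw [hQnorm t x] at hmem
        exact hmem
      rw [h1, h2]
      ring
    have hres : ∫ x, G x * (φ (Qflow M t x) - φ x)
        = ∫ x in Metric.closedBall (0:EuclideanSpace ℝ (Fin d)) R,
            G x * (φ (Qflow M t x) - φ x) :=
      (setIntegral_eq_integral_of_forall_compl_eq_zero hzero).symm
    have hGHint : Integrable (G * fun x => φ (Qflow M t x) - φ x) μ := by
      have := (hFt_int t).restrict (s := Metric.closedBall (0:EuclideanSpace ℝ (Fin d)) R)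
      exact this
    have hpull := condExp_mul_of_stronglyMeasurable_left hGsm hGHint (hHtint t)
    have hint : ∫ x, (G * fun x => φ (Qflow M t x) - φ x) x ∂μ
        = ∫ x, (μ[(G * fun x => φ (Qflow M t x) - φ x) | flowSigma M]) x ∂μ :=
      (integral_condExp hle).symm
    have hfinal : ∫ x, (G * fun x => φ (Qflow M t x) - φ x) x ∂μ = 0 := by
      rw [hint]
      have hae : (μ[(G * fun x => φ (Qflow M t x) - φ x) | flowSigma M]) =ᵐ[μ]
          (fun _ => (0:ℝ)) := by
        refine hpull.trans ?_
        filter_upwards [hcond0 t] with x hx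
        simp only [Pi.mul_apply]
        rw [← hx]
        ring
      rw [integral_congr_ae hae]
      simp
    rw [hres]
    simpa using hfinal
  have hC0 : 0 ≤ C := le_trans (norm_nonneg _) (hC 0)
  -- differentiation under the integral sign at t = 0
  have hder := hasDerivAt_integral_of_dominated_loc_of_deriv_le (μ := volume)
    (F := fun t x => G x * (φ (Qflow M t x) - φ x))
    (F' := fun t x => G x * (fderiv ℝ φ (Qflow M t x) (M (Qflow M t x))))
    (bound := fun x => C * ‖ρ x • conv x‖)
    (x₀ := (0:ℝ)) (s := Metric.ball 0 1) (Metric.ball_mem_nhds _ one_pos)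
    (Filter.Eventually.of_forall fun t => (hFt_int t).aestronglyMeasurable)
    (hFt_int 0)
    ((hGmeas.mul (((hφ.continuous_fderiv (by simp)).comp
        (Qflow M (0:ℝ)).continuous).clm_apply
        (hMcont.comp (Qflow M (0:ℝ)).continuous)).measurable).aestronglyMeasurable)
    (by
      filter_upwards [aux_ae_ne hd 0] with x hx
      intro t _
      rw [Real.norm_eq_abs, abs_mul]
      calc |G x| * |fderiv ℝ φ (Qflow M t x) (M (Qflow M t x))|
          ≤ |G x| * (C * ‖M x‖) := by
            apply mul_le_mul_of_nonneg_left _ (abs_nonneg _)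
            simpa [Real.norm_eq_abs] using hbnd t x
        _ = C * (|G x| * ‖M x‖) := by ring
        _ = C * ‖G x • M x‖ := by rw [norm_smul, Real.norm_eq_abs]
        _ = C * ‖ρ x • conv x‖ := by rw [hVG x hx])
    ((hconv_int.norm).const_mul C)
    (Filter.Eventually.of_forall fun x => fun t _ =>
      ((hφQd x t).sub_const (φ x)).const_mul (G x))
  have hderiv := hder.2
  have hzero_fun : (fun t => ∫ x, G x * (φ (Qflow M t x) - φ x)) = fun _ => (0:ℝ) :=
    funext haz
  rw [hzero_fun] at hderiv
  have hDzero : ∫ x, G x * (fderiv ℝ φ (Qflow M 0 x) (M (Qflow M 0 x))) = 0 :=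
    hderiv.unique (hasDerivAt_const 0 0)
  have hD : ∫ x, G x * (fderiv ℝ φ x (M x)) = 0 := by
    have heq : (fun x : EuclideanSpace ℝ (Fin d) =>
        G x * (fderiv ℝ φ (Qflow M 0 x) (M (Qflow M 0 x))))
        = fun x => G x * fderiv ℝ φ x (M x) := by
      funext x
      rw [Qflow_zero]
    rwa [heq] at hDzero
  have hφgrad : ∀ z v : EuclideanSpace ℝ (Fin d), ⟪gradient φ z, v⟫ = fderiv ℝ φ z v :=
    fun z v => InnerProductSpace.toDual_symm_apply
  have hcongr : ∀ᵐ x : EuclideanSpace ℝ (Fin d),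
      ρ x * ⟪conv x, gradient φ x⟫ = G x * fderiv ℝ φ x (M x) := by
    filter_upwards [aux_ae_ne hd 0] with x hx
    have h1 : ρ x * ⟪conv x, gradient φ x⟫ = ⟪ρ x • conv x, gradient φ x⟫ :=
      (real_inner_smul_left _ _ _).symm
    rw [h1, hVG x hx, real_inner_smul_left]
    congr 1
    rw [real_inner_comm]
    exact hφgrad x (M x)
  rw [integral_congr_ae hcongr]
  exact hD
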